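/- Let D∘ ⊂ D∘' be two nested dissections of the polygon P∘, and let δ• be a D∘'-accordion diagonal of P•. Then δ• is a D∘-accordion diagonal if and only if the δ∘'-coordinate of its g-vector g(D∘', δ•) vanishes for every diagonal δ∘' ∈ D∘' \ D∘; equivalently, if and only if δ• does not cross any diagonal of D∘' \ D∘ as a Z or as an S. -/

import Mathlib

/-!
Combinatorics of dissections of a convex polygon, following Pilaud–Plamondon–Stella,
"A τ-tilting approach to dissections of polygons".

We fix `2m` points on the unit circle, alternately colored white and black.  The white points
are labelled by `ZMod m` (the white point `i` sitting at angle `2πi/m`), and the black points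
are labelled by `ZMod m` as well (the black point `i` sitting between the white points `i` and
`i + 1`).  `P∘` (resp. `P•`) is the convex polygon with white (resp. black) vertices.  Segments
between points of the same color are encoded as unordered pairs `Sym2 (ZMod m)` of labels.
-/

open scoped Classical

/-- The point `x` lies strictly inside the counterclockwise arc from `a` to `b`
(all three points of the same color). -/
def wbtw (m : ℕ) (a x b : ZMod m) : Prop := (x - a).val < (b - a).val ∧ x ≠ a

/-- The black point `i` (between the white points `i` and `i+1`) lies strictly inside the
counterclockwise arc from the white point `a` to the white point `b`. -/
def bbtw (m : ℕ) (a : ZMod m) (i : ZMod m) (b : ZMod m) : Prop := (i - a).val < (b - a).val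

/-- `p` is a diagonal of the polygon: its endpoints are distinct and non-consecutive. -/
def IsDiag (m : ℕ) (p : Sym2 (ZMod m)) : Prop :=
  ∀ a b, p = s(a, b) → a ≠ b ∧ b ≠ a + 1 ∧ a ≠ b + 1

/-- Two segments with endpoints of the same color cross (all four endpoints are distinct, and
exactly one endpoint of the second lies strictly inside each of the two arcs determined by the
first). -/
def Cross (m : ℕ) (p q : Sym2 (ZMod m)) : Prop :=
  ∀ a b c d, p = s(a, b) → q = s(c, d) →
    (a ≠ c ∧ a ≠ d ∧ b ≠ c ∧ b ≠ d) ∧ (wbtw m a c b ↔ ¬ wbtw m a d b)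

/-- The black segment `q` crosses the white segment `p`: exactly one endpoint of `q` lies
strictly inside each of the two arcs determined by `p`. -/
def BWCross (m : ℕ) (q p : Sym2 (ZMod m)) : Prop :=
  ∀ i j a b, q = s(i, j) → p = s(a, b) → (bbtw m a i b ↔ ¬ bbtw m a j b)

/-- A dissection of the white polygon `P∘`: a set of pairwise non-crossing diagonals. -/
def IsDissection (m : ℕ) (D : Finset (Sym2 (ZMod m))) : Prop :=
  (∀ p ∈ D, IsDiag m p) ∧ ∀ p ∈ D, ∀ q ∈ D, ¬ Cross m p q

/-- `b` is the counterclockwise successor of `a` among the elements of `C`. -/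
def nextIn (m : ℕ) (C : Finset (ZMod m)) (a b : ZMod m) : Prop :=
  a ∈ C ∧ b ∈ C ∧ a ≠ b ∧ ∀ x ∈ C, ¬ wbtw m a x b

/-- `C` (a set of white vertices) is a cell of the dissection `D`: it has at least three
vertices, any two cyclically consecutive vertices of `C` are joined by a boundary edge of the
polygon or by a diagonal of `D`, and no diagonal of `D` joins two non-consecutive vertices
of `C`. -/
def IsCell (m : ℕ) (D : Finset (Sym2 (ZMod m))) (C : Finset (ZMod m)) : Prop :=
  3 ≤ C.card ∧
  (∀ a b, nextIn m C a b → (b = a + 1 ∨ s(a, b) ∈ D)) ∧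
  (∀ p ∈ D, ∀ a b, p = s(a, b) → a ∈ C → b ∈ C → (nextIn m C a b ∨ nextIn m C b a))

/-- `p` is an edge of the cell `C` (either a boundary edge of the polygon or a diagonal of the
dissection). -/
def IsCellEdge (m : ℕ) (C : Finset (ZMod m)) (p : Sym2 (ZMod m)) : Prop :=
  ∃ a b, p = s(a, b) ∧ nextIn m C a b

/-- `q` (a diagonal of the black polygon `P•`) is a `D`-accordion diagonal: it crosses either
none or exactly two consecutive edges (i.e., two edges sharing a vertex) of every cell
of `D`. -/
def IsAccordionDiag (m : ℕ) (D : Finset (Sym2 (ZMod m))) (q : Sym2 (ZMod m)) : Prop :=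
  IsDiag m q ∧ ∀ C, IsCell m D C →
    (∀ p, IsCellEdge m C p → ¬ BWCross m q p) ∨
    (∃ p₁ p₂, p₁ ≠ p₂ ∧ IsCellEdge m C p₁ ∧ IsCellEdge m C p₂ ∧
      BWCross m q p₁ ∧ BWCross m q p₂ ∧ (∃ v, v ∈ p₁ ∧ v ∈ p₂) ∧
      ∀ p, IsCellEdge m C p → BWCross m q p → (p = p₁ ∨ p = p₂))

/-- A `D`-accordion dissection: a set of pairwise non-crossing `D`-accordion diagonals. -/
def IsAccordionDissection (m : ℕ) (D : Finset (Sym2 (ZMod m))) (s : Finset (Sym2 (ZMod m))) :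
    Prop :=
  (∀ q ∈ s, IsAccordionDiag m D q) ∧ ∀ q ∈ s, ∀ q' ∈ s, ¬ Cross m q q'

/-- In the two cells of `D` adjacent to the white diagonal `δ∘ = s(a,b)`, the other edge
crossed by the black diagonal `δ•` in the cell `C` contains the white vertex `v`. -/
def OtherCrossedEdgeAt (m : ℕ) (δbull : Sym2 (ZMod m)) (δcirc : Sym2 (ZMod m))
    (C : Finset (ZMod m)) (v : ZMod m) : Prop :=
  ∃ p, IsCellEdge m C p ∧ p ≠ δcirc ∧ BWCross m δbull p ∧ v ∈ p

/-- The three edges crossed by `δ•` in the two cells of `D` containing `δ∘` form a `Z`. -/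
def ZShape (m : ℕ) (D : Finset (Sym2 (ZMod m))) (δcirc δbull : Sym2 (ZMod m)) : Prop :=
  ∃ a b, δcirc = s(a, b) ∧ BWCross m δbull δcirc ∧
    ∃ C₁ C₂, IsCell m D C₁ ∧ IsCell m D C₂ ∧ nextIn m C₁ b a ∧ nextIn m C₂ a b ∧
      OtherCrossedEdgeAt m δbull δcirc C₁ a ∧ OtherCrossedEdgeAt m δbull δcirc C₂ b

/-- The three edges crossed by `δ•` in the two cells of `D` containing `δ∘` form an `S`. -/
def SShape (m : ℕ) (D : Finset (Sym2 (ZMod m))) (δcirc δbull : Sym2 (ZMod m)) : Prop :=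
  ∃ a b, δcirc = s(a, b) ∧ BWCross m δbull δcirc ∧
    ∃ C₁ C₂, IsCell m D C₁ ∧ IsCell m D C₂ ∧ nextIn m C₁ b a ∧ nextIn m C₂ a b ∧
      OtherCrossedEdgeAt m δbull δcirc C₁ b ∧ OtherCrossedEdgeAt m δbull δcirc C₂ a

/-- The `δ∘`-coordinate `ε(δ∘ ∈ D, δ•)` of the `g`-vector of the black diagonal `δ•` with
respect to the dissection `D`: it is `1`, `-1` or `0` according to whether the three edges
crossed by `δ•` in the two cells of `D` containing `δ∘` form a `Z`, an `S` or a `V` (and `0`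
if `δ•` does not cross `δ∘`). -/
noncomputable def gvec (m : ℕ) (D : Finset (Sym2 (ZMod m))) (δbull : Sym2 (ZMod m))
    (δcirc : Sym2 (ZMod m)) : ℤ :=
  if ZShape m D δcirc δbull then 1 else if SShape m D δcirc δbull then -1 else 0

/-!
Every cell `C` of `D∘` is tiled by cells of `D∘'`. Inside `C`, the black diagonal `δ•` runs
through a chain of these cells, and in each of them the two crossed edges share a vertex, the
pivot, since `δ•` is a `D∘'`-accordion diagonal. At a diagonal of `D∘' \ D∘` the crossing is a `V`
exactly when the pivots of the two adjacent cells agree.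

If every such crossing is a `V`, the pivot stays the same all the way through `C`, so the two
edges of `C` crossed by `δ•` share it. Conversely, if the two edges of a cell `K` of `D∘` crossed
by `δ•` share a vertex `v`, they lie on opposite sides of every chord of `K` crossed by `δ•`, so
each such chord passes through `v`. The two `D∘'`-cells adjacent to a diagonal of `D∘' \ D∘` lie
in one cell `K` of `D∘`, and the diagonal and the other crossed edges of those two cells are
chords of `K` through `v`: the crossing is a `V`.
-/

namespace ZMod

variable {n : ℕ}

theorem val_sub_add_val_sub [NeZero n] (x y z : ZMod n) :
    (x - y).val + (y - z).val = (x - z).val ∨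
    (x - y).val + (y - z).val = (x - z).val + n := by
  have hadd := ZMod.val_add (x - y) (y - z)
  rw [sub_add_sub_cancel] at hadd
  have h1 := ZMod.val_lt (x - y)
  have h2 := ZMod.val_lt (y - z)
  rcases Nat.lt_or_ge ((x - y).val + (y - z).val) n with h | h
  · left; rw [hadd, Nat.mod_eq_of_lt h]
  · right; rw [hadd, Nat.mod_eq_sub_mod h, Nat.mod_eq_of_lt (by omega)]; omega

theorem val_sub_eq_zero_iff {x y : ZMod n} : (x - y).val = 0 ↔ x = y := by
  rw [ZMod.val_eq_zero, sub_eq_zero]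

theorem val_sub_pos [NeZero n] {x y : ZMod n} (h : x ≠ y) : 0 < (x - y).val :=
  Nat.pos_of_ne_zero (mt val_sub_eq_zero_iff.1 h)

theorem val_sub_add_val_sub_swap [NeZero n] {x y : ZMod n} (h : x ≠ y) :
    (x - y).val + (y - x).val = n := by
  have := val_sub_add_val_sub x y x
  rw [sub_self, ZMod.val_zero] at this
  have := val_sub_pos h
  have := ZMod.val_lt (x - y)
  omega

theorem val_sub_add_val_sub_swap_eq_zero_or [NeZero n] (x y : ZMod n) :
    (x - y).val + (y - x).val = 0 ∨ (x - y).val + (y - x).val = n := by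
  rcases eq_or_ne x y with rfl | h
  · simp
  · exact Or.inr (val_sub_add_val_sub_swap h)

theorem eq_of_val_sub_eq [NeZero n] {x y a : ZMod n} (h : (x - a).val = (y - a).val) : x = y := by
  simpa using ZMod.val_injective n h

theorem val_add_one_sub_self (hn : 1 < n) (x : ZMod n) : (x + 1 - x).val = 1 := by
  have : Fact (1 < n) := ⟨hn⟩
  rw [add_sub_cancel_left, ZMod.val_one]

theorem ne_add_one_self (hn : 1 < n) (x : ZMod n) : x ≠ x + 1 := by
  intro h
  have := val_add_one_sub_self hn x
  rw [← h, sub_self, ZMod.val_zero] at this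
  exact zero_ne_one this

theorem val_sub_two_le [NeZero n] {a b : ZMod n} (hn : 1 < n) (hab : a ≠ b)
    (hab1 : a ≠ b + 1) :
    2 ≤ (a - b).val := by
  have := val_sub_pos hab
  have : (a - b).val ≠ 1 := fun h =>
    hab1 (eq_of_val_sub_eq (a := b) (by rw [h, val_add_one_sub_self hn]))
  omega

end ZMod

open ZMod

/-- `v` lies on the closed counterclockwise arc from `e` to `f`. -/
def onArc (m : ℕ) (e v f : ZMod m) : Prop := (v - e).val ≤ (f - e).val

theorem onArc_self_left {m : ℕ} (e f : ZMod m) : onArc m e e f := by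
  simp [onArc]

section Arcs

variable {m : ℕ} [NeZero m]

theorem wbtw_iff (a x b : ZMod m) :
    wbtw m a x b ↔ 0 < (x - a).val ∧ (x - a).val < (b - a).val := by
  refine ⟨fun ⟨h1, h2⟩ => ⟨val_sub_pos h2, h1⟩, fun ⟨h1, h2⟩ => ⟨h2, ?_⟩⟩
  rintro rfl
  simp at h1

theorem bbtw_iff_not_bbtw_swap {a b : ZMod m} (i : ZMod m) (h : a ≠ b) :
    bbtw m a i b ↔ ¬ bbtw m b i a := by
  unfold bbtw
  have := val_sub_add_val_sub_swap h
  have := ZMod.val_lt (i - a)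
  have := ZMod.val_lt (i - b)
  rcases val_sub_add_val_sub i a b with t | t <;> omega

theorem wbtw_iff_not_wbtw_swap {a b x : ZMod m} (hxa : x ≠ a) (hxb : x ≠ b) (h : a ≠ b) :
    wbtw m a x b ↔ ¬ wbtw m b x a := by
  rw [wbtw_iff, wbtw_iff]
  have := val_sub_add_val_sub_swap h
  have := ZMod.val_lt (x - a)
  have := ZMod.val_lt (x - b)
  have := val_sub_pos hxa
  have := val_sub_pos hxb
  rcases val_sub_add_val_sub x a b with t | t <;> omega

theorem not_onArc_iff {e f : ZMod m} (v : ZMod m) (h : e ≠ f) :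
    ¬ onArc m e v f ↔ wbtw m f v e := by
  rw [wbtw_iff]; unfold onArc
  have := val_sub_add_val_sub_swap h
  have := ZMod.val_lt (v - e)
  have := ZMod.val_lt (v - f)
  rcases val_sub_add_val_sub v e f with t1 | t1 <;>
    rcases val_sub_add_val_sub v f e with t2 | t2 <;> omega

theorem wbtw_of_onArc {e f v : ZMod m} (h : onArc m e v f) (hve : v ≠ e) (hvf : v ≠ f) :
    wbtw m e v f := by
  rw [wbtw_iff]
  unfold onArc at h
  have := val_sub_pos hve
  have := val_sub_pos hvf
  have := ZMod.val_lt (f - e)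
  have := ZMod.val_lt (v - f)
  rcases val_sub_add_val_sub v f e with t | t <;> omega

theorem eq_or_eq_of_onArc_of_onArc {a b v : ZMod m} (hab : a ≠ b)
    (h1 : onArc m a v b) (h2 : onArc m b v a) : v = a ∨ v = b := by
  unfold onArc at h1 h2
  have := val_sub_add_val_sub_swap hab
  have := ZMod.val_lt (v - a)
  have := ZMod.val_lt (v - b)
  rcases val_sub_add_val_sub v a b with t | t
  · exact Or.inl (val_sub_eq_zero_iff.1 (by omega))
  · exact Or.inr (val_sub_eq_zero_iff.1 (by omega))

theorem onArc_and_onArc_or {a b c d : ZMod m} (hc : onArc m b c a) (hd : onArc m b d a)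
    (hcd : c ≠ d) :
    (onArc m c a d ∧ onArc m c b d) ∨ (onArc m d a c ∧ onArc m d b c) := by
  unfold onArc at *
  have := val_sub_add_val_sub_swap_eq_zero_or b c
  have := val_sub_add_val_sub_swap_eq_zero_or b d
  have := val_sub_add_val_sub_swap hcd
  have := val_sub_pos hcd
  have := ZMod.val_lt (a - b)
  have := ZMod.val_lt (c - b)
  have := ZMod.val_lt (d - b)
  have := ZMod.val_lt (a - c)
  have := ZMod.val_lt (a - d)
  rcases val_sub_add_val_sub a c b with t1 | t1 <;>
    rcases val_sub_add_val_sub d c b with t2 | t2 <;>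
    rcases val_sub_add_val_sub a d b with t3 | t3 <;>
    rcases val_sub_add_val_sub c d b with t4 | t4 <;> omega

theorem onArc_of_wbtw_of_not_wbtw {a b u v x : ZMod m} (hab : a ≠ b) (huv : u ≠ v)
    (hu : onArc m b u a) (hv : onArc m b v a) (hna : ¬ wbtw m u a v)
    (hnb : ¬ wbtw m u b v) (hne : ¬(u = a ∧ v = b)) (hx : wbtw m u x v) :
    onArc m b x a := by
  have hcomb : (u - b).val ≠ (a - b).val ∨ (v - b).val ≠ 0 := by
    by_contra! h
    exact hne ⟨eq_of_val_sub_eq h.1, val_sub_eq_zero_iff.1 h.2⟩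
  rw [wbtw_iff] at hx hna hnb
  unfold onArc at *
  have := val_sub_add_val_sub_swap hab
  have := val_sub_pos huv
  have := ZMod.val_lt (a - b)
  have := ZMod.val_lt (u - b)
  have := ZMod.val_lt (v - b)
  have := ZMod.val_lt (x - b)
  have := ZMod.val_lt (x - u)
  have := ZMod.val_lt (a - u)
  have := ZMod.val_lt (b - u)
  have := ZMod.val_lt (v - u)
  have t4 := val_sub_add_val_sub b u b
  rw [sub_self, ZMod.val_zero] at t4
  rcases val_sub_add_val_sub a u b with t1 | t1 <;>
    rcases val_sub_add_val_sub x u b with t2 | t2 <;>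
    rcases val_sub_add_val_sub v u b with t3 | t3 <;>
    rcases t4 with t4 | t4 <;> omega

theorem onArc_of_bbtw_of_not_wbtw {a b g g' j : ZMod m} (hab : a ≠ b) (hgg : g ≠ g')
    (h1 : bbtw m g j g') (h2 : bbtw m b j a) (h3 : ¬ wbtw m g a g')
    (h4 : ¬ wbtw m g b g') : onArc m b g a ∧ onArc m b g' a := by
  rw [wbtw_iff] at h3 h4
  unfold bbtw at h1 h2
  unfold onArc
  have := val_sub_add_val_sub_swap hab
  have := val_sub_pos hgg
  have := ZMod.val_lt (j - g)
  have := ZMod.val_lt (j - b)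
  have := ZMod.val_lt (a - g)
  have := ZMod.val_lt (a - b)
  have := ZMod.val_lt (g' - g)
  have := ZMod.val_lt (g' - b)
  have := ZMod.val_lt (g - b)
  have := ZMod.val_lt (b - g)
  rcases val_sub_add_val_sub j g b with t1 | t1 <;>
    rcases val_sub_add_val_sub a g b with t2 | t2 <;>
    rcases val_sub_add_val_sub g' g b with t3 | t3 <;>
    rcases val_sub_add_val_sub_swap_eq_zero_or g b with t4 | t4 <;> omega

theorem onArc_of_not_wbtw_of_nested {c c' d d' κ x : ZMod m} (hcc : c ≠ c') (hdd : d ≠ d')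
    (h1 : onArc m c d c') (h2 : onArc m c d' c') (h3 : onArc m d' c d)
    (h4 : onArc m d' c' d) (h5 : bbtw m c κ c') (h6 : bbtw m d κ d')
    (h7 : ¬ wbtw m c x c') : onArc m d' x d := by
  rw [wbtw_iff] at h7
  unfold bbtw at h5 h6
  unfold onArc at *
  have := val_sub_pos hcc
  have := val_sub_pos hdd
  have := val_sub_pos hdd.symm
  have := ZMod.val_lt (κ - d)
  have := ZMod.val_lt (κ - c)
  have := ZMod.val_lt (d' - d)
  have := ZMod.val_lt (d' - c)
  have := ZMod.val_lt (c - d')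
  have := ZMod.val_lt (c' - d')
  have := ZMod.val_lt (x - d')
  have := ZMod.val_lt (x - c)
  have := ZMod.val_lt (d - d')
  have := ZMod.val_lt (d - c)
  have := ZMod.val_lt (c' - c)
  rcases val_sub_add_val_sub κ d c with t1 | t1 <;>
    rcases val_sub_add_val_sub d' d c with t2 | t2 <;>
    rcases val_sub_add_val_sub_swap_eq_zero_or c d' with t3 | t3 <;>
    rcases val_sub_add_val_sub c' d' c with t4 | t4 <;>
    rcases val_sub_add_val_sub x d' c with t5 | t5 <;>
    rcases val_sub_add_val_sub d d' c with t6 | t6 <;> omega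

end Arcs

section Segments

variable {m : ℕ}

theorem isDiag_mk_iff {a b : ZMod m} :
    IsDiag m s(a, b) ↔ a ≠ b ∧ b ≠ a + 1 ∧ a ≠ b + 1 := by
  refine ⟨fun h => h a b rfl, fun ⟨h1, h2, h3⟩ x y hxy => ?_⟩
  rcases Sym2.eq_iff.1 hxy with ⟨rfl, rfl⟩ | ⟨rfl, rfl⟩
  · exact ⟨h1, h2, h3⟩
  · exact ⟨h1.symm, h3, h2⟩

variable [NeZero m]

theorem bwCross_mk_iff {i j a b : ZMod m} (hab : a ≠ b) :
    BWCross m s(i, j) s(a, b) ↔ (bbtw m a i b ↔ ¬ bbtw m a j b) := by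
  refine ⟨fun h => h i j a b rfl rfl, fun h i' j' a' b' hq hp => ?_⟩
  have hba : ∀ k, bbtw m b k a ↔ ¬ bbtw m a k b := fun k => bbtw_iff_not_bbtw_swap k hab.symm
  rcases Sym2.eq_iff.1 hq with ⟨rfl, rfl⟩ | ⟨rfl, rfl⟩ <;>
    rcases Sym2.eq_iff.1 hp with ⟨rfl, rfl⟩ | ⟨rfl, rfl⟩
  · exact h
  · rw [hba, hba]; tauto
  · tauto
  · rw [hba, hba]; tauto

theorem bwCross_of_bbtw_of_not_bbtw {i j a b : ZMod m} (hab : a ≠ b)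
    (hi : bbtw m a i b) (hj : ¬ bbtw m a j b) : BWCross m s(i, j) s(a, b) :=
  (bwCross_mk_iff hab).2 ⟨fun _ => hj, fun _ => hi⟩

theorem bwCross_of_not_bbtw_of_bbtw {i j a b : ZMod m} (hab : a ≠ b)
    (hi : ¬ bbtw m a i b) (hj : bbtw m a j b) : BWCross m s(i, j) s(a, b) :=
  Sym2.eq_swap (a := j) ▸ bwCross_of_bbtw_of_not_bbtw hab hj hi

theorem wbtw_iff_wbtw_of_not_cross {a b c d : ZMod m} (hab : a ≠ b) (hac : a ≠ c)
    (had : a ≠ d) (hbc : b ≠ c) (hbd : b ≠ d) (h : ¬ Cross m s(a, b) s(c, d)) :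
    wbtw m a c b ↔ wbtw m a d b := by
  by_contra hiff
  refine h fun a' b' c' d' hp hq => ?_
  have hc := wbtw_iff_not_wbtw_swap hac.symm hbc.symm hab
  have hd := wbtw_iff_not_wbtw_swap had.symm hbd.symm hab
  rcases Sym2.eq_iff.1 hp with ⟨rfl, rfl⟩ | ⟨rfl, rfl⟩ <;>
    rcases Sym2.eq_iff.1 hq with ⟨rfl, rfl⟩ | ⟨rfl, rfl⟩
  · exact ⟨⟨hac, had, hbc, hbd⟩, by tauto⟩
  · exact ⟨⟨had, hac, hbd, hbc⟩, by tauto⟩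
  · exact ⟨⟨hbc, hbd, hac, had⟩, by tauto⟩
  · exact ⟨⟨hbd, hbc, had, hac⟩, by tauto⟩

end Segments

section Successors

variable {m : ℕ} {C : Finset (ZMod m)}

theorem exists_nextIn_from {a c : ZMod m} (ha : a ∈ C) (hc : c ∈ C) (hca : c ≠ a) :
    ∃ b, nextIn m C a b := by
  obtain ⟨b, hb, hmin⟩ := Finset.exists_min_image (C.filter (· ≠ a)) (fun x => (x - a).val)
    ⟨c, Finset.mem_filter.2 ⟨hc, hca⟩⟩
  rw [Finset.mem_filter] at hb
  refine ⟨b, ha, hb.1, hb.2.symm, fun x hx hw => ?_⟩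
  have := hmin x (Finset.mem_filter.2 ⟨hx, hw.2⟩)
  exact absurd hw.1 (by omega)

variable [NeZero m]

theorem nextIn.right_unique {a b b' : ZMod m} (h : nextIn m C a b) (h' : nextIn m C a b') :
    b = b' := by
  have n1 := (wbtw_iff _ _ _).not.1 (h.2.2.2 b' h'.2.1)
  have n2 := (wbtw_iff _ _ _).not.1 (h'.2.2.2 b h.2.1)
  have := val_sub_pos h.2.2.1.symm
  have := val_sub_pos h'.2.2.1.symm
  exact eq_of_val_sub_eq (a := a) (by omega)

theorem nextIn.onArc {a b v : ZMod m} (h : nextIn m C a b) (hv : v ∈ C) : onArc m b v a := by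
  by_contra hh
  rw [not_onArc_iff v h.2.2.1.symm] at hh
  exact h.2.2.2 v hv hh

theorem nextIn.not_nextIn_swap {a b : ZMod m} (hC : 3 ≤ C.card) (h : nextIn m C a b) :
    ¬ nextIn m C b a := by
  intro h'
  have hsub : C ⊆ {a, b} := by
    intro x hx
    rw [Finset.mem_insert, Finset.mem_singleton]
    by_contra! hx'
    by_cases hw : wbtw m a x b
    · exact h.2.2.2 x hx hw
    · rw [wbtw_iff_not_wbtw_swap hx'.1 hx'.2 h.2.2.1, not_not] at hw
      exact h'.2.2.2 x hx hw
  have := (Finset.card_le_card hsub).trans (Finset.card_le_two (a := a) (b := b))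
  omega

theorem nextIn.mk_ne_mk {x y z t : ZMod m} (hC : 3 ≤ C.card) (h : nextIn m C x y)
    (h' : nextIn m C z t) (hne : ¬(x = z ∧ y = t)) : s(x, y) ≠ s(z, t) := by
  intro hh
  rcases Sym2.eq_iff.1 hh with ⟨rfl, rfl⟩ | ⟨rfl, rfl⟩
  · exact hne ⟨rfl, rfl⟩
  · exact h.not_nextIn_swap hC h'

theorem exists_nextIn_to {b c : ZMod m} (hb : b ∈ C) (hc : c ∈ C) (hcb : c ≠ b) :
    ∃ a, nextIn m C a b := by
  obtain ⟨a, ha, hmin⟩ := Finset.exists_min_image (C.filter (· ≠ b)) (fun x => (b - x).val)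
    ⟨c, Finset.mem_filter.2 ⟨hc, hcb⟩⟩
  rw [Finset.mem_filter] at ha
  refine ⟨a, ha.1, hb, ha.2, fun x hx hw => ?_⟩
  rw [wbtw_iff] at hw
  have hxb : x ≠ b := by
    rintro rfl
    have := val_sub_pos ha.2.symm
    omega
  have := hmin x (Finset.mem_filter.2 ⟨hx, hxb⟩)
  have := ZMod.val_lt (b - x)
  rcases val_sub_add_val_sub b x a with t | t <;> omega

theorem exists_nextIn_of_val_sub_lt {v : ZMod m} (hC : 1 < C.card) :
    ∃ x y, nextIn m C x y ∧ (v - x).val < (y - x).val := by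
  obtain ⟨a, ha, b, hb, hab⟩ := Finset.one_lt_card.1 hC
  obtain ⟨x, hx, hmin⟩ := Finset.exists_min_image C (fun w => (v - w).val) ⟨a, ha⟩
  obtain ⟨c, hc, hcx⟩ : ∃ c ∈ C, c ≠ x := by
    rcases eq_or_ne a x with rfl | h
    · exact ⟨b, hb, hab.symm⟩
    · exact ⟨a, ha, h⟩
  obtain ⟨y, hy⟩ := exists_nextIn_from hx hc hcx
  refine ⟨x, y, hy, ?_⟩
  by_contra hvy
  have := hmin y hy.2.1
  have := ZMod.val_lt (v - y)
  have := val_sub_pos hy.2.2.1.symm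
  rcases val_sub_add_val_sub v y x with t | t <;> omega

theorem exists_nextIn_bbtw (hC : 1 < C.card) (i : ZMod m) :
    ∃ x y, nextIn m C x y ∧ bbtw m x i y :=
  exists_nextIn_of_val_sub_lt hC

theorem exists_nextIn_wbtw_of_notMem (hC : 1 < C.card) {v : ZMod m} (hv : v ∉ C) :
    ∃ x y, nextIn m C x y ∧ wbtw m x v y := by
  obtain ⟨x, y, hxy, hlt⟩ := exists_nextIn_of_val_sub_lt (v := v) hC
  exact ⟨x, y, hxy, hlt, fun h => hv (h ▸ hxy.1)⟩

theorem nextIn.eq_of_bbtw {x y x' y' i : ZMod m} (h : nextIn m C x y) (h' : nextIn m C x' y')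
    (hi : bbtw m x i y) (hi' : bbtw m x' i y') : x = x' ∧ y = y' := by
  obtain rfl : x = x' := by
    by_contra hne
    unfold bbtw at hi hi'
    have w1 := (wbtw_iff _ _ _).not.1 (h.2.2.2 x' h'.1)
    have w2 := (wbtw_iff _ _ _).not.1 (h'.2.2.2 x h.1)
    have := val_sub_add_val_sub_swap (Ne.symm hne)
    have := val_sub_pos (Ne.symm hne)
    have := ZMod.val_lt (i - x)
    have := ZMod.val_lt (i - x')
    have := ZMod.val_lt (y' - x')
    have := ZMod.val_lt (x' - x)
    rcases val_sub_add_val_sub i x' x with t | t <;> omega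
  exact ⟨rfl, h.right_unique h'⟩

theorem nextIn.eq_or_eq_of_bwCross {i j x y a₁ b₁ a₂ b₂ : ZMod m} (hxy : nextIn m C x y)
    (hcr : BWCross m s(i, j) s(x, y)) (h₁ : nextIn m C a₁ b₁) (hi : bbtw m a₁ i b₁)
    (h₂ : nextIn m C a₂ b₂) (hj : bbtw m a₂ j b₂) : (x = a₁ ∧ y = b₁) ∨ (x = a₂ ∧ y = b₂) := by
  rw [bwCross_mk_iff hxy.2.2.1] at hcr
  by_cases hxi : bbtw m x i y
  · exact Or.inl (hxy.eq_of_bbtw h₁ hxi hi)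
  · exact Or.inr (hxy.eq_of_bbtw h₂ (not_not.1 (mt hcr.2 hxi)) hj)

end Successors

section Cells

variable {m : ℕ} [NeZero m] {D : Finset (Sym2 (ZMod m))} {C : Finset (ZMod m)}

theorem IsCell.exists_nextIn_from_endpoint (hm : 1 < m) (hD : IsDissection m D)
    (hC : IsCell m D C) {e f x y : ZMod m} (hef : s(e, f) ∈ D) (hx : x ∈ C) (hy : y ∈ C)
    (hwx : wbtw m e x f) (hwy : wbtw m f y e) :
    ∃ w x₀, nextIn m C w x₀ ∧ wbtw m e x₀ f ∧ (w = e ∨ w = f) := by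
  have hefd := (isDiag_mk_iff.1 (hD.1 _ hef)).1
  have hef' := val_sub_add_val_sub_swap hefd
  obtain ⟨x₀, hx₀, hmin⟩ := Finset.exists_min_image (C.filter (wbtw m e · f))
    (fun v => (v - e).val) ⟨x, Finset.mem_filter.2 ⟨hx, hwx⟩⟩
  obtain ⟨hx₀C, hx₀w⟩ := Finset.mem_filter.1 hx₀
  have hyx₀ : y ≠ x₀ := by
    rintro rfl
    rw [wbtw_iff] at hx₀w hwy
    have := ZMod.val_lt (y - e)
    have := ZMod.val_lt (y - f)
    rcases val_sub_add_val_sub y f e with t | t <;> omega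
  obtain ⟨w, hw⟩ := exists_nextIn_to hx₀C hy hyx₀
  refine ⟨w, x₀, hw, hx₀w, ?_⟩
  by_contra! hwef
  rw [wbtw_iff] at hx₀w
  by_cases hin : wbtw m e w f
  · -- `x₀` comes first in `(e, f)`, so `y` would sit between `w` and `x₀`
    have := hmin w (Finset.mem_filter.2 ⟨hw.1, hin⟩)
    have : (x₀ - e).val ≠ (w - e).val := fun h => hw.2.2.1 (eq_of_val_sub_eq h).symm
    refine hw.2.2.2 y hy ?_
    rw [wbtw_iff] at hin hwy ⊢
    have := ZMod.val_lt (y - e)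
    have := ZMod.val_lt (y - w)
    have := ZMod.val_lt (x₀ - w)
    have := ZMod.val_lt (y - f)
    rcases val_sub_add_val_sub y f e with t1 | t1 <;>
      rcases val_sub_add_val_sub y w e with t2 | t2 <;>
      rcases val_sub_add_val_sub x₀ w e with t3 | t3 <;> omega
  · have hwfe := (wbtw_iff _ _ _).1 <| not_not.1 <|
      (wbtw_iff_not_wbtw_swap hwef.1 hwef.2 hefd).not.1 hin
    rcases hC.2.1 w x₀ hw with hsucc | hdiag
    · -- the edge `(w, w + 1)` has no room for `e` strictly inside it
      have hsv : (x₀ - w).val = 1 := hsucc ▸ val_add_one_sub_self hm w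
      have := val_sub_add_val_sub_swap hwef.1.symm
      have := val_sub_pos hwef.1.symm
      have := ZMod.val_lt (e - w)
      have := ZMod.val_lt (x₀ - e)
      rcases val_sub_add_val_sub e w f with t1 | t1 <;>
        rcases val_sub_add_val_sub x₀ w e with t2 | t2 <;> omega
    · -- otherwise `s(w, x₀)` is a diagonal of `D` crossing `s(e, f)`
      have hx₀e : x₀ ≠ e := fun h => by subst h; simp at hx₀w
      have hx₀f : x₀ ≠ f := fun h => by subst h; omega
      have hiff := wbtw_iff_wbtw_of_not_cross hefd hwef.1.symm hx₀e.symm hwef.2.symm hx₀f.symm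
        (hD.2 _ hef _ hdiag)
      rw [wbtw_iff, wbtw_iff] at hiff
      have := ZMod.val_lt (w - e)
      rcases val_sub_add_val_sub w f e with t | t <;> omega

theorem IsCell.not_wbtw_of_wbtw (hm : 1 < m) (hD : IsDissection m D) (hC : IsCell m D C)
    {e f x y : ZMod m} (hef : s(e, f) ∈ D) (hx : x ∈ C) (hy : y ∈ C)
    (hwx : wbtw m e x f) : ¬ wbtw m f y e := by
  intro hwy
  have hefd := (isDiag_mk_iff.1 (hD.1 _ hef)).1
  obtain ⟨w, x₀, hwx₀, hx₀in, hw⟩ := hC.exists_nextIn_from_endpoint hm hD hef hx hy hwx hwy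
  obtain ⟨w', y₀, hwy₀, hy₀in, hw'⟩ :=
    hC.exists_nextIn_from_endpoint hm hD (Sym2.eq_swap ▸ hef) hy hx hwy hwx
  have hx₀y₀ : x₀ ≠ y₀ := by
    rintro rfl
    rw [wbtw_iff] at hx₀in hy₀in
    have := val_sub_add_val_sub_swap hefd
    have := ZMod.val_lt (x₀ - e)
    have := ZMod.val_lt (x₀ - f)
    rcases val_sub_add_val_sub x₀ f e with t | t <;> omega
  have hnext : ¬ (nextIn m C e f ∨ nextIn m C f e) := by
    rintro (hn | hn)
    · exact hn.2.2.2 x₀ hwx₀.2.1 hx₀in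
    · exact hn.2.2.2 y₀ hwy₀.2.1 hy₀in
  rcases hw with rfl | rfl <;> rcases hw' with rfl | rfl
  · exact hnext (hC.2.2 _ hef _ _ rfl hwx₀.1 hwy₀.1)
  · exact hx₀y₀ (hwx₀.right_unique hwy₀)
  · exact hx₀y₀ (hwx₀.right_unique hwy₀)
  · exact hnext (hC.2.2 _ hef _ _ rfl hwy₀.1 hwx₀.1)

theorem IsCell.onArc_of_onArc (hm : 1 < m) (hD : IsDissection m D) (hC : IsCell m D C)
    {e f c c' x : ZMod m} (hef : s(e, f) ∈ D) (hc : c ∈ C) (hc' : c' ∈ C) (hcc' : c ≠ c')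
    (hne : s(e, f) ≠ s(c, c')) (h : onArc m e c f) (h' : onArc m e c' f) (hx : x ∈ C) :
    onArc m e x f := by
  by_contra hxef
  rw [not_onArc_iff x (isDiag_mk_iff.1 (hD.1 _ hef)).1] at hxef
  by_cases hcef : c ≠ e ∧ c ≠ f
  · exact hC.not_wbtw_of_wbtw hm hD hef hc hx (wbtw_of_onArc h hcef.1 hcef.2) hxef
  by_cases hc'ef : c' ≠ e ∧ c' ≠ f
  · exact hC.not_wbtw_of_wbtw hm hD hef hc' hx (wbtw_of_onArc h' hc'ef.1 hc'ef.2) hxef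
  apply hne
  rw [not_and_or, not_not, not_not] at hcef hc'ef
  rcases hcef with rfl | rfl <;> rcases hc'ef with rfl | rfl
  · exact absurd rfl hcc'
  · rfl
  · exact Sym2.eq_swap
  · exact absurd rfl hcc'

end Cells

section LeftCell

def IsEdge (m : ℕ) (D : Finset (Sym2 (ZMod m))) (a b : ZMod m) : Prop :=
  b = a + 1 ∨ s(a, b) ∈ D

/-- The cell of `D` on the arc from `b` to `a` bordered by the edge `(a, b)`: the vertices of that
arc lying weakly inside every other diagonal of `D` whose arc contains `a` and `b`. -/
noncomputable def leftCell (m : ℕ) [NeZero m] (D : Finset (Sym2 (ZMod m))) (a b : ZMod m) :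
    Finset (ZMod m) :=
  Finset.univ.filter fun v => onArc m b v a ∧
    ∀ e f, s(e, f) ∈ D → onArc m e a f → onArc m e b f → ¬(e = a ∧ f = b) → onArc m e v f

variable {m : ℕ} {D : Finset (Sym2 (ZMod m))}

theorem IsEdge.ne (hm : 3 ≤ m) (hD : IsDissection m D) {a b : ZMod m} (h : IsEdge m D a b) :
    a ≠ b ∧ a ≠ b + 1 := by
  rcases h with rfl | h
  · refine ⟨ne_add_one_self (by omega) a, fun ha => ?_⟩
    have h2 : ((2 : ℕ) : ZMod m) = 0 := by push_cast; linear_combination -ha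
    have := Nat.le_of_dvd two_pos ((ZMod.natCast_eq_zero_iff 2 m).1 h2)
    omega
  · obtain ⟨h1, -, h3⟩ := isDiag_mk_iff.1 (hD.1 _ h)
    exact ⟨h1, h3⟩

variable [NeZero m]

theorem mem_leftCell {a b v : ZMod m} :
    v ∈ leftCell m D a b ↔ onArc m b v a ∧
      ∀ e f, s(e, f) ∈ D → onArc m e a f → onArc m e b f → ¬(e = a ∧ f = b) →
        onArc m e v f := by
  simp [leftCell]

theorem left_mem_leftCell (a b : ZMod m) : a ∈ leftCell m D a b :=
  mem_leftCell.2 ⟨le_refl _, fun _ _ _ h _ _ => h⟩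

theorem right_mem_leftCell (a b : ZMod m) : b ∈ leftCell m D a b :=
  mem_leftCell.2 ⟨onArc_self_left b a, fun _ _ _ _ h _ => h⟩

theorem nextIn_leftCell {a b : ZMod m} (hab : a ≠ b) : nextIn m (leftCell m D a b) a b :=
  ⟨left_mem_leftCell a b, right_mem_leftCell a b, hab, fun x hx hw =>
    (not_onArc_iff x hab.symm).2 hw (mem_leftCell.1 hx).1⟩

theorem nextIn_leftCell_of_mem (hm : 3 ≤ m) (hD : IsDissection m D) {a b : ZMod m}
    (hedge : IsEdge m D a b) {c d : ZMod m} (hcd : s(c, d) ∈ D) (hc : c ∈ leftCell m D a b)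
    (hd : d ∈ leftCell m D a b) :
    nextIn m (leftCell m D a b) c d ∨ nextIn m (leftCell m D a b) d c := by
  have hab := (hedge.ne hm hD).1
  have hcd' := (isDiag_mk_iff.1 (hD.1 _ hcd)).1
  by_cases hs1 : c = a ∧ d = b
  · obtain ⟨rfl, rfl⟩ := hs1
    exact Or.inl (nextIn_leftCell hab)
  by_cases hs2 : d = a ∧ c = b
  · obtain ⟨rfl, rfl⟩ := hs2
    exact Or.inr (nextIn_leftCell hab)
  rcases onArc_and_onArc_or (mem_leftCell.1 hc).1 (mem_leftCell.1 hd).1 hcd' with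
    ⟨h1, h2⟩ | ⟨h1, h2⟩
  · refine Or.inr ⟨hd, hc, hcd'.symm, fun x hx hw => ?_⟩
    exact (not_onArc_iff x hcd').2 hw ((mem_leftCell.1 hx).2 c d hcd h1 h2 hs1)
  · refine Or.inl ⟨hc, hd, hcd', fun x hx hw => ?_⟩
    exact (not_onArc_iff x hcd'.symm).2 hw
      ((mem_leftCell.1 hx).2 d c (Sym2.eq_swap ▸ hcd) h1 h2 hs2)

theorem exists_separating_diag {a b u t x : ZMod m} (hu : u ∈ leftCell m D a b)
    (ht : t ∈ leftCell m D a b) (hx : x ∉ leftCell m D a b) (hxs : onArc m b x a)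
    (hxut : wbtw m u x t) :
    ∃ e f, s(e, f) ∈ D ∧ ¬(e = a ∧ f = b) ∧ onArc m e u f ∧ ¬ onArc m e x f ∧
      (f - u).val < (x - u).val ∧ (x - u).val < (e - u).val ∧ (e - u).val ≤ (t - u).val := by
  have hx' := mt (fun h => mem_leftCell.2 ⟨hxs, h⟩) hx
  simp only [not_forall] at hx'
  obtain ⟨e, f, hef, hea, heb, hne, hexf⟩ := hx'
  have h1 := (mem_leftCell.1 hu).2 e f hef hea heb hne
  have h2 := (mem_leftCell.1 ht).2 e f hef hea heb hne
  refine ⟨e, f, hef, hne, h1, hexf, ?_⟩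
  rw [wbtw_iff] at hxut
  unfold onArc at h1 h2 hexf
  have := val_sub_add_val_sub_swap_eq_zero_or e u
  have := ZMod.val_lt (f - u)
  have := ZMod.val_lt (x - u)
  have := ZMod.val_lt (t - u)
  have := ZMod.val_lt (e - u)
  have := ZMod.val_lt (f - e)
  have := ZMod.val_lt (x - e)
  have := ZMod.val_lt (u - e)
  rcases val_sub_add_val_sub f u e with t1 | t1 <;>
    rcases val_sub_add_val_sub x u e with t2 | t2 <;>
    rcases val_sub_add_val_sub t u e with t3 | t3 <;> omega

/-- Take the diagonal of `D` from `u` reaching farthest towards `t`: anything keeping its far end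
out of the cell would cross it. -/
theorem diag_mem_of_forall_notMem_leftCell (hm : 1 < m) (hD : IsDissection m D)
    {a b u t : ZMod m} (hu : u ∈ leftCell m D a b) (ht : t ∈ leftCell m D a b)
    (hut : 2 ≤ (t - u).val) (hside : ∀ x, wbtw m u x t → onArc m b x a)
    (hnot : ∀ x, wbtw m u x t → x ∉ leftCell m D a b) :
    s(t, u) ∈ D ∧ ¬(t = a ∧ u = b) := by
  have hw1 : wbtw m u (u + 1) t := by rw [wbtw_iff, val_add_one_sub_self hm]; omega
  obtain ⟨e₁, f₁, he₁D, he₁ne, -, -, hf₁, he₁, he₁t⟩ :=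
    exists_separating_diag hu ht (hnot _ hw1) (hside _ hw1) hw1
  rw [val_add_one_sub_self hm] at hf₁ he₁
  obtain rfl : u = f₁ := (val_sub_eq_zero_iff.1 (by omega)).symm
  obtain ⟨w, hw, hmax⟩ := Finset.exists_max_image
    (Finset.univ.filter fun w => s(w, u) ∈ D ∧ ¬(w = a ∧ u = b) ∧ 0 < (w - u).val ∧
      (w - u).val ≤ (t - u).val)
    (fun w => (w - u).val)
    ⟨e₁, Finset.mem_filter.2 ⟨Finset.mem_univ _, he₁D, he₁ne, by omega, he₁t⟩⟩
  simp only [Finset.mem_filter, Finset.mem_univ, true_and] at hw hmax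
  obtain ⟨hwD, hwne, hw0, hwt⟩ := hw
  rcases eq_or_ne w t with rfl | hwt'
  · exact ⟨hwD, hwne⟩
  exfalso
  have hww : wbtw m u w t :=
    (wbtw_iff _ _ _).2 ⟨hw0, lt_of_le_of_ne hwt fun h => hwt' (eq_of_val_sub_eq h)⟩
  obtain ⟨e₂, f₂, he₂D, he₂ne, hue₂, hwe₂, hf₂, he₂, he₂t⟩ :=
    exists_separating_diag hu ht (hnot _ hww) (hside _ hww) hww
  rcases eq_or_ne f₂ u with rfl | hf₂u
  · -- a separating diagonal issued from `u` would reach farther than `w`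
    have := hmax e₂ ⟨he₂D, he₂ne, by omega, he₂t⟩
    omega
  · -- any other separating diagonal crosses `s(w, u)`
    have he₂w : e₂ ≠ w := fun h => by subst h; omega
    have he₂u : e₂ ≠ u := fun h => by subst h; simp at he₂
    have hf₂w : f₂ ≠ w := fun h => by subst h; omega
    have hiff := wbtw_iff_wbtw_of_not_cross (isDiag_mk_iff.1 (hD.1 _ he₂D)).1 he₂w he₂u hf₂w
      hf₂u (hD.2 _ he₂D _ hwD)
    have hu' := wbtw_of_onArc hue₂ he₂u.symm hf₂u.symm
    rw [← hiff, wbtw_iff] at hu'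
    unfold onArc at hwe₂
    omega

theorem IsEdge.of_nextIn_leftCell (hm : 3 ≤ m) (hD : IsDissection m D) {a b u v : ZMod m}
    (hedge : IsEdge m D a b) (hn : nextIn m (leftCell m D a b) u v) : IsEdge m D u v := by
  have hab := (hedge.ne hm hD).1
  obtain ⟨hu, hv, huv, hno⟩ := hn
  by_contra hcon
  have hsab : ¬(u = a ∧ v = b) := by
    rintro ⟨rfl, rfl⟩
    exact hcon hedge
  have hside : ∀ x, wbtw m u x v → onArc m b x a := fun x =>
    onArc_of_wbtw_of_not_wbtw (x := x) hab huv (mem_leftCell.1 hu).1 (mem_leftCell.1 hv).1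
      (hno a (left_mem_leftCell a b)) (hno b (right_mem_leftCell a b)) hsab
  have hvu : v ≠ u + 1 := fun h => hcon (Or.inl h)
  have hdiag := diag_mem_of_forall_notMem_leftCell (by omega) hD hu hv
    (val_sub_two_le (n := m) (by omega) huv.symm hvu) hside (fun x hx h => hno x h hx)
  exact hcon (Or.inr (Sym2.eq_swap ▸ hdiag.1))

theorem IsEdge.exists_mem_leftCell_ne (hm : 3 ≤ m) (hD : IsDissection m D) {a b : ZMod m}
    (hedge : IsEdge m D a b) : ∃ c ∈ leftCell m D a b, c ≠ a ∧ c ≠ b := by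
  obtain ⟨hab, hab1⟩ := hedge.ne hm hD
  by_contra! hno
  have hnot : ∀ x, wbtw m b x a → x ∉ leftCell m D a b := fun x hx hxK =>
    hx.2 (hno x hxK fun h => by subst h; exact (lt_irrefl _) hx.1)
  have hdiag := diag_mem_of_forall_notMem_leftCell (by omega) hD (right_mem_leftCell a b)
    (left_mem_leftCell a b) (val_sub_two_le (n := m) (by omega) hab hab1)
    (fun x hx => le_of_lt ((wbtw_iff _ _ _).1 hx).2) hnot
  exact hdiag.2 ⟨rfl, rfl⟩

theorem IsEdge.isCell_leftCell (hm : 3 ≤ m) (hD : IsDissection m D) {a b : ZMod m}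
    (hedge : IsEdge m D a b) : IsCell m D (leftCell m D a b) := by
  have hab := (hedge.ne hm hD).1
  obtain ⟨c, hc, hca, hcb⟩ := hedge.exists_mem_leftCell_ne hm hD
  refine ⟨?_, fun u v hn => hedge.of_nextIn_leftCell hm hD hn,
    fun p hp e f hpe he hf => nextIn_leftCell_of_mem hm hD hedge (hpe ▸ hp) he hf⟩
  have hsub : ({a, b, c} : Finset (ZMod m)) ⊆ leftCell m D a b := by
    intro x hx
    simp only [Finset.mem_insert, Finset.mem_singleton] at hx
    rcases hx with rfl | rfl | rfl
    · exact left_mem_leftCell _ _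
    · exact right_mem_leftCell _ _
    · exact hc
  have hcard : ({a, b, c} : Finset (ZMod m)).card = 3 :=
    Finset.card_eq_three.2 ⟨a, b, c, hab, hca.symm, hcb.symm, rfl⟩
  exact hcard ▸ Finset.card_le_card hsub

/-- Refining a dissection refines its cells. -/
theorem IsCell.leftCell_subset (hm : 1 < m) {D' : Finset (Sym2 (ZMod m))} (hDD' : D ⊆ D')
    {C : Finset (ZMod m)} (hC : IsCell m D C) {a b : ZMod m} (ha : a ∈ C) (hb : b ∈ C)
    (hab : a ≠ b) (hnba : ¬ nextIn m C b a) : leftCell m D' a b ⊆ C := by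
  intro v hv
  by_contra hvC
  obtain ⟨x, y, hxy, hwv⟩ := exists_nextIn_wbtw_of_notMem (by have := hC.1; omega) hvC
  rcases hC.2.1 x y hxy with rfl | hsxy
  · have := ((wbtw_iff _ _ _).1 hwv)
    rw [val_add_one_sub_self hm] at this
    omega
  have hyx : ¬(y = a ∧ x = b) := by
    rintro ⟨rfl, rfl⟩
    exact hnba hxy
  exact (not_onArc_iff v hxy.2.2.1.symm).2 hwv <| (mem_leftCell.1 hv).2 y x
    (Sym2.eq_swap ▸ hDD' hsxy) (hxy.onArc ha) (hxy.onArc hb) hyx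

theorem IsCell.eq_leftCell (hm : 1 < m) (hD : IsDissection m D) {C : Finset (ZMod m)}
    (hC : IsCell m D C) {a b : ZMod m} (hab : nextIn m C a b) : C = leftCell m D a b := by
  refine Finset.Subset.antisymm
    (fun v hv => mem_leftCell.2 ⟨hab.onArc hv, fun e f hef h h' hn => ?_⟩)
    (hC.leftCell_subset hm subset_rfl hab.1 hab.2.1 hab.2.2.1 (hab.not_nextIn_swap hC.1))
  by_cases hne : s(e, f) = s(a, b)
  · rcases Sym2.eq_iff.1 hne with ⟨rfl, rfl⟩ | ⟨rfl, rfl⟩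
    exacts [absurd ⟨rfl, rfl⟩ hn, hab.onArc hv]
  · exact hC.onArc_of_onArc hm hD hef hab.1 hab.2.1 hab.2.2.1 hne h h' hv

variable {C : Finset (ZMod m)}

theorem IsCell.nextIn_of_isEdge (hm : 1 < m) (hC : IsCell m D C) {d d' a b i : ZMod m}
    (hd : d ∈ C) (hd' : d' ∈ C) (hdd' : d ≠ d') (he : IsEdge m D d d') (hid : bbtw m d' i d)
    (hab : nextIn m C a b) (hia : bbtw m a i b) (hlt : (d' - d).val < (a - b).val) :
    nextIn m C d d' := by
  rcases he with rfl | he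
  · refine ⟨hd, hd', hdd', fun x _ hx => ?_⟩
    have := (wbtw_iff _ _ _).1 hx
    rw [val_add_one_sub_self hm] at this
    omega
  refine (hC.2.2 _ he d d' rfl hd hd').resolve_right fun hd'd => ?_
  obtain ⟨rfl, rfl⟩ := hd'd.eq_of_bbtw hab hid hia
  omega

theorem IsEdge.leftCell_subset_leftCell (hm : 3 ≤ m) (hD : IsDissection m D)
    {D' : Finset (Sym2 (ZMod m))} (hDD' : D ⊆ D') {a b : ZMod m} (hedge : IsEdge m D a b) :
    leftCell m D' a b ⊆ leftCell m D a b := by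
  have hab := (hedge.ne hm hD).1
  have hK := hedge.isCell_leftCell hm hD
  exact hK.leftCell_subset (by omega) hDD' (left_mem_leftCell a b) (right_mem_leftCell a b) hab
    ((nextIn_leftCell hab).not_nextIn_swap hK.1)

end LeftCell

section Crossing

variable {m : ℕ} [NeZero m]

/-- The position of the exit edge `(d, d')` of a cell entered through its edge `(u, w)`. -/
structure NestedArc (m : ℕ) (u w d d' : ZMod m) : Prop where
  ne : u ≠ w
  ne' : d ≠ d'
  onArc_left : onArc m w d u
  onArc_right : onArc m w d' u
  not_wbtw_left : ¬ wbtw m d u d'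
  not_wbtw_right : ¬ wbtw m d w d'
  ne_entry : ¬(d = u ∧ d' = w)
  ne_entry_swap : ¬(d = w ∧ d' = u)

namespace NestedArc

variable {u w d d' : ZMod m}

theorem val_sub_ne (h : NestedArc m u w d d') :
    ((d - w).val ≠ (u - w).val ∨ (d' - w).val ≠ 0) ∧
    ((d - w).val ≠ 0 ∨ (d' - w).val ≠ (u - w).val) := by
  constructor <;> by_contra! hh
  · exact h.ne_entry ⟨eq_of_val_sub_eq hh.1, val_sub_eq_zero_iff.1 hh.2⟩
  · exact h.ne_entry_swap ⟨val_sub_eq_zero_iff.1 hh.1, eq_of_val_sub_eq hh.2⟩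

theorem val_sub_lt (h : NestedArc m u w d d') : (d' - d).val < (u - w).val := by
  obtain ⟨q1, q2⟩ := h.val_sub_ne
  have hnu := (wbtw_iff _ _ _).not.1 h.not_wbtw_left
  have hnw := (wbtw_iff _ _ _).not.1 h.not_wbtw_right
  have hd := h.onArc_left
  have hd' := h.onArc_right
  unfold onArc at hd hd'
  have := val_sub_add_val_sub_swap h.ne
  have := val_sub_pos h.ne'
  have := val_sub_pos h.ne'.symm
  have := ZMod.val_lt (d' - d)
  have := ZMod.val_lt (u - d)
  have := ZMod.val_lt (w - d)
  have := ZMod.val_lt (d - w)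
  have := ZMod.val_lt (d' - w)
  have := ZMod.val_lt (u - w)
  have t3 := val_sub_add_val_sub w d w
  rw [sub_self, ZMod.val_zero] at t3
  rcases val_sub_add_val_sub d' d w with t1 | t1 <;>
    rcases val_sub_add_val_sub u d w with t2 | t2 <;> rcases t3 with t3 | t3 <;> omega

theorem bbtw_swap_of_bbtw (h : NestedArc m u w d d') {i : ZMod m} (hi : bbtw m u i w) :
    bbtw m d' i d := by
  refine (bbtw_iff_not_bbtw_swap i h.ne'.symm).2 fun hbad => ?_
  obtain ⟨q1, q2⟩ := h.val_sub_ne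
  have hnu := (wbtw_iff _ _ _).not.1 h.not_wbtw_left
  have hnw := (wbtw_iff _ _ _).not.1 h.not_wbtw_right
  have hd := h.onArc_left
  have hd' := h.onArc_right
  unfold onArc at hd hd'
  unfold bbtw at hi hbad
  have := val_sub_add_val_sub_swap h.ne
  have := val_sub_pos h.ne'
  have := val_sub_pos h.ne'.symm
  have := ZMod.val_lt (d' - d)
  have := ZMod.val_lt (u - d)
  have := ZMod.val_lt (w - d)
  have := ZMod.val_lt (d - w)
  have := ZMod.val_lt (d' - w)
  have := ZMod.val_lt (u - w)
  have := ZMod.val_lt (i - d)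
  have := ZMod.val_lt (i - w)
  have := ZMod.val_lt (i - u)
  have t3 := val_sub_add_val_sub w d w
  rw [sub_self, ZMod.val_zero] at t3
  rcases val_sub_add_val_sub d' d w with t1 | t1 <;>
    rcases val_sub_add_val_sub u d w with t2 | t2 <;> rcases t3 with t3 | t3 <;>
    rcases val_sub_add_val_sub i d w with t4 | t4 <;>
    rcases val_sub_add_val_sub i u w with t5 | t5 <;> omega

theorem onArc (h : NestedArc m u w d d') {y : ZMod m} (hy : onArc m d y d') :
    onArc m w y u := by
  obtain ⟨q1, q2⟩ := h.val_sub_ne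
  have hnu := (wbtw_iff _ _ _).not.1 h.not_wbtw_left
  have hnw := (wbtw_iff _ _ _).not.1 h.not_wbtw_right
  have hd := h.onArc_left
  have hd' := h.onArc_right
  unfold _root_.onArc at *
  have := val_sub_add_val_sub_swap_eq_zero_or d w
  have := val_sub_add_val_sub_swap h.ne
  have := val_sub_pos h.ne'
  have := ZMod.val_lt (u - d)
  have := ZMod.val_lt (d' - d)
  have := ZMod.val_lt (d - w)
  have := ZMod.val_lt (w - d)
  have := ZMod.val_lt (y - d)
  have := ZMod.val_lt (y - w)
  have := ZMod.val_lt (d' - w)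
  have := ZMod.val_lt (u - w)
  rcases val_sub_add_val_sub u d w with t1 | t1 <;>
    rcases val_sub_add_val_sub d' d w with t2 | t2 <;>
    rcases val_sub_add_val_sub_swap_eq_zero_or d w with t3 | t3 <;>
    rcases val_sub_add_val_sub y d w with t4 | t4 <;> omega

end NestedArc

theorem nestedArc_of_nextIn {K : Finset (ZMod m)} {u w d d' : ZMod m} (hK : 3 ≤ K.card)
    (hside : ∀ x ∈ K, onArc m w x u) (huw : nextIn m K u w) (hdd' : nextIn m K d d')
    (hne : ¬(d = u ∧ d' = w)) : NestedArc m u w d d' where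
  ne := huw.2.2.1
  ne' := hdd'.2.2.1
  onArc_left := hside d hdd'.1
  onArc_right := hside d' hdd'.2.1
  not_wbtw_left := hdd'.2.2.2 u huw.1
  not_wbtw_right := hdd'.2.2.2 w huw.2.1
  ne_entry := hne
  ne_entry_swap := by
    rintro ⟨rfl, rfl⟩
    exact huw.not_nextIn_swap hK hdd'

theorem IsEdge.exists_exit (hm : 3 ≤ m) {D : Finset (Sym2 (ZMod m))} (hD : IsDissection m D)
    {u w j : ZMod m} (hedge : IsEdge m D u w) (hj : bbtw m w j u) :
    ∃ d d', nextIn m (leftCell m D u w) d d' ∧ bbtw m d j d' ∧ NestedArc m u w d d' := by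
  have hK := hedge.isCell_leftCell hm hD
  obtain ⟨d, d', hdd', hjd⟩ := exists_nextIn_bbtw (C := leftCell m D u w) (by have := hK.1; omega) j
  refine ⟨d, d', hdd', hjd, nestedArc_of_nextIn hK.1 (fun x hx => (mem_leftCell.1 hx).1)
    (nextIn_leftCell (hedge.ne hm hD).1) hdd' ?_⟩
  rintro ⟨rfl, rfl⟩
  exact (bbtw_iff_not_bbtw_swap j hdd'.2.2.1).1 hjd hj

end Crossing

section Pivot

variable {m : ℕ} {D : Finset (Sym2 (ZMod m))}

theorem eq_of_not_zShape_of_not_sShape {q : Sym2 (ZMod m)} {d d' t t' : ZMod m}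
    (hZ : ¬ ZShape m D s(d, d') q) (hS : ¬ SShape m D s(d, d') q) (hcr : BWCross m q s(d, d'))
    {K K' : Finset (ZMod m)} (hK : IsCell m D K) (hK' : IsCell m D K') (hdd' : nextIn m K d d')
    (hd'd : nextIn m K' d' d) (ht : t ∈ s(d, d')) (ht' : t' ∈ s(d, d'))
    (hO : OtherCrossedEdgeAt m q s(d, d') K t) (hO' : OtherCrossedEdgeAt m q s(d, d') K' t') :
    t = t' := by
  rcases Sym2.mem_iff.1 ht with rfl | rfl <;> rcases Sym2.mem_iff.1 ht' with rfl | rfl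
  · rfl
  · exact absurd ⟨t, t', rfl, hcr, K', K, hK', hK, hd'd, hdd', hO', hO⟩ hS
  · exact absurd ⟨t', t, rfl, hcr, K', K, hK', hK, hd'd, hdd', hO', hO⟩ hZ
  · rfl

variable [NeZero m]

theorem IsAccordionDiag.exists_mem_mem {i j : ZMod m} (hq : IsAccordionDiag m D s(i, j))
    {K : Finset (ZMod m)} (hK : IsCell m D K) {d d' g g' : ZMod m} (hd : nextIn m K d d')
    (hid : bbtw m d i d') (hg : nextIn m K g g') (hjg : bbtw m g j g') :
    ∃ v, v ∈ s(d, d') ∧ v ∈ s(g, g') := by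
  by_cases hjd : bbtw m d j d'
  · obtain ⟨rfl, rfl⟩ := hd.eq_of_bbtw hg hjd hjg
    exact ⟨d, Sym2.mem_mk_left _ _, Sym2.mem_mk_left _ _⟩
  by_cases hig : bbtw m g i g'
  · obtain ⟨rfl, rfl⟩ := hg.eq_of_bbtw hd hig hid
    exact absurd hjg hjd
  have hcd := bwCross_of_bbtw_of_not_bbtw hd.2.2.1 hid hjd
  have hcg := bwCross_of_not_bbtw_of_bbtw hg.2.2.1 hig hjg
  have hne : s(d, d') ≠ s(g, g') := hd.mk_ne_mk hK.1 hg fun h => hjd (h.1 ▸ h.2 ▸ hjg)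
  rcases hq.2 K hK with hnone | ⟨p₁, p₂, -, -, -, -, -, ⟨v, hv₁, hv₂⟩, hall⟩
  · exact absurd hcd (hnone _ ⟨d, d', rfl, hd⟩)
  rcases hall _ ⟨d, d', rfl, hd⟩ hcd with rfl | rfl <;>
    rcases hall _ ⟨g, g', rfl, hg⟩ hcg with h | h
  · exact absurd h.symm hne
  · exact ⟨v, hv₁, h ▸ hv₂⟩
  · exact ⟨v, hv₂, h ▸ hv₁⟩
  · exact absurd h.symm hne

/-- The two crossed edges of `K` lie on opposite sides of the crossed chord `s(c, c')`, so their
common vertex is an endpoint of it. -/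
theorem mem_of_bwCross_of_mem {K : Finset (ZMod m)} {i j c c' d d' g g' v : ZMod m}
    (hcc : c ≠ c') (hc : c ∈ K) (hc' : c' ∈ K) (hcr : BWCross m s(i, j) s(c, c'))
    (hd : nextIn m K d d') (hid : bbtw m d i d') (hg : nextIn m K g g') (hjg : bbtw m g j g')
    (hvd : v ∈ s(d, d')) (hvg : v ∈ s(g, g')) : v ∈ s(c, c') := by
  have key : ∀ {c c'}, c ≠ c' → c ∈ K → c' ∈ K → bbtw m c' i c → bbtw m c j c' →
      v ∈ s(c, c') := by
    intro c c' hcc hc hc' hic hjc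
    obtain ⟨hd₁, hd₂⟩ := onArc_of_bbtw_of_not_wbtw hcc hd.2.2.1 hid hic (hd.2.2.2 c hc)
      (hd.2.2.2 c' hc')
    obtain ⟨hg₁, hg₂⟩ := onArc_of_bbtw_of_not_wbtw hcc.symm hg.2.2.1 hjg hjc (hg.2.2.2 c' hc')
      (hg.2.2.2 c hc)
    have h1 : onArc m c' v c := by rcases Sym2.mem_iff.1 hvd with rfl | rfl <;> assumption
    have h2 : onArc m c v c' := by rcases Sym2.mem_iff.1 hvg with rfl | rfl <;> assumption
    exact Sym2.mem_iff.2 (eq_or_eq_of_onArc_of_onArc hcc h2 h1)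
  rw [bwCross_mk_iff hcc] at hcr
  by_cases hic : bbtw m c i c'
  · have hjc := (bbtw_iff_not_bbtw_swap j hcc).not_left.1 (hcr.1 hic)
    exact Sym2.eq_swap ▸ key hcc.symm hc' hc hic hjc
  · exact key hcc hc hc' ((bbtw_iff_not_bbtw_swap i hcc.symm).2 hic) (not_not.1 (mt hcr.2 hic))

end Pivot

section Walks

variable {m : ℕ} [NeZero m] {D D' : Finset (Sym2 (ZMod m))}

/-- Follow a black segment crossing `(u, w)` through the cells of `D'` until it leaves through an
edge of `D`: that edge borders the cell of `D` containing `u` and `w`. -/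
theorem IsEdge.exists_mem_leftCell (hm : 3 ≤ m) (hD : IsDissection m D)
    (hD' : IsDissection m D') (hDD' : D ⊆ D') {ι κ u w : ZMod m} (hedge : IsEdge m D' u w)
    (hι : bbtw m u ι w) (hκ : bbtw m w κ u) :
    ∃ d d', IsEdge m D d d' ∧ u ∈ leftCell m D d d' ∧ w ∈ leftCell m D d d' ∧
      bbtw m d κ d' ∧ onArc m w d u ∧ onArc m w d' u := by
  induction hn : (u - w).val using Nat.strong_induction_on generalizing u w with
  | _ n ih =>
    have hM := hedge.isCell_leftCell hm hD'
    obtain ⟨c, c', hcc', hκc, hnest⟩ := hedge.exists_exit hm hD' hκ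
    have hu : u ∈ leftCell m D' u w := left_mem_leftCell u w
    have hw : w ∈ leftCell m D' u w := right_mem_leftCell u w
    by_cases hedgeD : IsEdge m D c c'
    · have hsub : leftCell m D' u w ⊆ leftCell m D c c' :=
        hM.eq_leftCell (by omega) hD' hcc' ▸ hedgeD.leftCell_subset_leftCell hm hD hDD'
      exact ⟨c, c', hedgeD, hsub hu, hsub hw, hκc, hnest.onArc_left, hnest.onArc_right⟩
    have hcD' : s(c, c') ∈ D' := (hM.2.1 c c' hcc').resolve_left fun h => hedgeD (Or.inl h)
    have hcD : s(c, c') ∉ D := fun h => hedgeD (Or.inr h)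
    obtain ⟨d, d', hedge', hc'K, hcK, hκd, hd, hd'⟩ := ih _ (hn ▸ hnest.val_sub_lt)
      (Or.inr (Sym2.eq_swap ▸ hcD')) (hnest.bbtw_swap_of_bbtw hι) hκc rfl
    have hdd' := (hedge'.ne hm hD).1
    have hsub : leftCell m D' u w ⊆ leftCell m D d d' := by
      intro x hx
      refine mem_leftCell.2 ⟨onArc_of_not_wbtw_of_nested hnest.ne' hdd' hd hd'
        (mem_leftCell.1 hcK).1 (mem_leftCell.1 hc'K).1 hκc hκd (hcc'.2.2.2 x hx), ?_⟩
      intro e f hef h h' hne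
      exact hM.onArc_of_onArc (by omega) hD' (hDD' hef) hcc'.1 hcc'.2.1 hnest.ne'
        (fun h => hcD (h ▸ hef)) ((mem_leftCell.1 hcK).2 e f hef h h' hne)
        ((mem_leftCell.1 hc'K).2 e f hef h h' hne) hx
    exact ⟨d, d', hedge', hsub hu, hsub hw, hκd, hnest.onArc hd, hnest.onArc hd'⟩

theorem exists_isCell_mem_mem (hm : 3 ≤ m) (hD : IsDissection m D) (hD' : IsDissection m D')
    (hDD' : D ⊆ D') {a b : ZMod m} (hab : s(a, b) ∈ D') :
    ∃ K, IsCell m D K ∧ a ∈ K ∧ b ∈ K := by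
  have hne := (isDiag_mk_iff.1 (hD'.1 _ hab)).1
  obtain ⟨d, d', hedge, ha, hb, -⟩ := IsEdge.exists_mem_leftCell hm hD hD' hDD' (Or.inr hab)
    (ι := a) (by simpa [bbtw] using val_sub_pos hne.symm) (κ := b)
    (by simpa [bbtw] using val_sub_pos hne)
  exact ⟨_, hedge.isCell_leftCell hm hD, ha, hb⟩

end Walks

section Accordion

variable {m : ℕ} [NeZero m] {D D' : Finset (Sym2 (ZMod m))}

theorem IsAccordionDiag.exists_pivot (hm : 3 ≤ m) (hD : IsDissection m D)
    (hD' : IsDissection m D') (hDD' : D ⊆ D') {i j : ZMod m} (hq : IsAccordionDiag m D s(i, j))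
    {a b : ZMod m} (hp : s(a, b) ∈ D') (hpD : s(a, b) ∉ D) (hcr : BWCross m s(i, j) s(a, b)) :
    ∃ v, ∀ C w, IsCell m D' C → (nextIn m C b a ∨ nextIn m C a b) →
      OtherCrossedEdgeAt m s(i, j) s(a, b) C w → w ∈ s(a, b) → w = v := by
  obtain ⟨hab, hba1, hab1⟩ := isDiag_mk_iff.1 (hD'.1 _ hp)
  obtain ⟨K, hK, haK, hbK⟩ := exists_isCell_mem_mem hm hD hD' hDD' hp
  have hnab : ¬ nextIn m K a b := fun h => (hK.2.1 a b h).elim hba1 hpD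
  have hnba : ¬ nextIn m K b a := fun h => (hK.2.1 b a h).elim hab1 (Sym2.eq_swap ▸ hpD)
  have hCK : ∀ C, IsCell m D' C → (nextIn m C b a ∨ nextIn m C a b) → C ⊆ K := by
    rintro C hC (h | h) <;> rw [hC.eq_leftCell (by omega) hD' h]
    exacts [hK.leftCell_subset (by omega) hDD' hbK haK hab.symm hnab,
      hK.leftCell_subset (by omega) hDD' haK hbK hab hnba]
  obtain ⟨d, d', hd, hid⟩ := exists_nextIn_bbtw (C := K) (by have := hK.1; omega) i
  obtain ⟨g, g', hg, hjg⟩ := exists_nextIn_bbtw (C := K) (by have := hK.1; omega) j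
  obtain ⟨v, hvd, hvg⟩ := hq.exists_mem_mem hK hd hid hg hjg
  have hvab := mem_of_bwCross_of_mem hab haK hbK hcr hd hid hg hjg hvd hvg
  refine ⟨v, fun C w hC hCab ⟨_, ⟨x, y, rfl, hxy⟩, hne, hcrxy, hw⟩ hwab => ?_⟩
  have hvxy := mem_of_bwCross_of_mem hxy.2.2.1 (hCK C hC hCab hxy.1) (hCK C hC hCab hxy.2.1)
    hcrxy hd hid hg hjg hvd hvg
  by_contra hwv
  exact hne (((Sym2.mem_and_mem_iff (Ne.symm hwv)).1 ⟨hvxy, hw⟩).trans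
    ((Sym2.mem_and_mem_iff (Ne.symm hwv)).1 ⟨hvab, hwab⟩).symm)

theorem IsAccordionDiag.not_zShape_and_not_sShape (hm : 3 ≤ m) (hD : IsDissection m D)
    (hD' : IsDissection m D') (hDD' : D ⊆ D') {q : Sym2 (ZMod m)} (hq : IsAccordionDiag m D q)
    {p : Sym2 (ZMod m)} (hp : p ∈ D') (hpD : p ∉ D) :
    ¬ ZShape m D' p q ∧ ¬ SShape m D' p q := by
  induction q using Sym2.ind with | _ i j =>
  constructor
  · rintro ⟨a, b, rfl, hcr, C₁, C₂, hC₁, hC₂, h₁, h₂, hO₁, hO₂⟩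
    obtain ⟨v, hv⟩ := hq.exists_pivot hm hD hD' hDD' hp hpD hcr
    exact h₁.2.2.1 ((hv C₂ b hC₂ (Or.inr h₂) hO₂ (Sym2.mem_mk_right a b)).trans
      (hv C₁ a hC₁ (Or.inl h₁) hO₁ (Sym2.mem_mk_left a b)).symm)
  · rintro ⟨a, b, rfl, hcr, C₁, C₂, hC₁, hC₂, h₁, h₂, hO₁, hO₂⟩
    obtain ⟨v, hv⟩ := hq.exists_pivot hm hD hD' hDD' hp hpD hcr
    exact h₁.2.2.1 ((hv C₁ b hC₁ (Or.inl h₁) hO₁ (Sym2.mem_mk_right a b)).trans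
      (hv C₂ a hC₂ (Or.inr h₂) hO₂ (Sym2.mem_mk_left a b)).symm)

theorem IsAccordionDiag.exists_mem_of_walk (hm : 3 ≤ m) (hD' : IsDissection m D')
    (hDD' : D ⊆ D') {i j : ZMod m} (hq : IsAccordionDiag m D' s(i, j))
    (hV : ∀ p ∈ D', p ∉ D → ¬ ZShape m D' p s(i, j) ∧ ¬ SShape m D' p s(i, j))
    {C : Finset (ZMod m)} (hC : IsCell m D C) {a₁ b₁ a₂ b₂ : ZMod m}
    (h₁ : nextIn m C a₁ b₁) (hi₁ : bbtw m a₁ i b₁) (h₂ : nextIn m C a₂ b₂)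
    (hj₂ : bbtw m a₂ j b₂) {u w : ZMod m} (hedge : IsEdge m D' u w) (hu : u ∈ C) (hw : w ∈ C)
    (hCwu : ¬ nextIn m C w u) (hi : bbtw m u i w) (hj : bbtw m w j u)
    (hμ : (u - w).val ≤ (a₁ - b₁).val) :
    ∃ v ∈ s(u, w), v ∈ s(a₂, b₂) ∧
      OtherCrossedEdgeAt m s(i, j) s(u, w) (leftCell m D' u w) v := by
  induction hn : (u - w).val using Nat.strong_induction_on generalizing u w with
  | _ n ih =>
  have hK := hedge.isCell_leftCell hm hD'
  obtain ⟨d, d', hdd', hjd, hnest⟩ := hedge.exists_exit hm hD' hj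
  have huw := hnest.ne
  have hid' := hnest.bbtw_swap_of_bbtw hi
  have hμ' := hnest.val_sub_lt
  have hnid : ¬ bbtw m d i d' := (bbtw_iff_not_bbtw_swap i hnest.ne').not_left.2 hid'
  have hnju : ¬ bbtw m u j w := (bbtw_iff_not_bbtw_swap j huw).not_left.2 hj
  have hKC := hC.leftCell_subset (by omega) hDD' hu hw huw hCwu
  have hne : s(d, d') ≠ s(u, w) := fun h => by
    rcases Sym2.eq_iff.1 h with h | h
    exacts [hnest.ne_entry h, hnest.ne_entry_swap h]
  have hO : ∀ v ∈ s(d, d'), OtherCrossedEdgeAt m s(i, j) s(u, w) (leftCell m D' u w) v :=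
    fun v hv => ⟨_, ⟨d, d', rfl, hdd'⟩, hne, bwCross_of_not_bbtw_of_bbtw hnest.ne' hnid hjd, hv⟩
  obtain ⟨t, htuw, htd⟩ := hq.exists_mem_mem hK (nextIn_leftCell huw) hi hdd' hjd
  by_cases hedgeD : IsEdge m D d d'
  · -- `(d, d')` is the edge of `C` behind which `j` lies
    obtain ⟨rfl, rfl⟩ := (hC.nextIn_of_isEdge (by omega) (hKC hdd'.1) (hKC hdd'.2.1) hnest.ne'
      hedgeD hid' h₁ hi₁ (by omega)).eq_of_bbtw h₂ hjd hj₂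
    exact ⟨t, htuw, htd, hO t htd⟩
  have hdD' : s(d, d') ∈ D' := (hK.2.1 d d' hdd').resolve_left fun h => hedgeD (Or.inl h)
  have hdD : s(d, d') ∉ D := fun h => hedgeD (Or.inr h)
  have hedge' : IsEdge m D' d' d := Or.inr (Sym2.eq_swap ▸ hdD')
  obtain ⟨v, hvd, hv₂, hOv⟩ := ih _ (hn ▸ hμ') hedge' (hKC hdd'.2.1) (hKC hdd'.1)
    (fun h => hedgeD (hC.2.1 d d' h)) hid' hjd (by omega) rfl
  rw [Sym2.eq_swap (a := d')] at hvd hOv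
  have htv := eq_of_not_zShape_of_not_sShape (hV _ hdD' hdD).1 (hV _ hdD' hdD).2
    (bwCross_of_not_bbtw_of_bbtw hnest.ne' hnid hjd) hK (hedge'.isCell_leftCell hm hD')
    hdd' (nextIn_leftCell hnest.ne'.symm) htd hvd
    ⟨_, ⟨u, w, rfl, nextIn_leftCell huw⟩, hne.symm, bwCross_of_bbtw_of_not_bbtw huw hi hnju,
      htuw⟩ hOv
  exact ⟨v, htv ▸ htuw, hv₂, hO v hvd⟩

theorem IsAccordionDiag.of_forall_not_zShape_and_not_sShape (hm : 3 ≤ m)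
    (hD' : IsDissection m D') (hDD' : D ⊆ D') {q : Sym2 (ZMod m)} (hq : IsAccordionDiag m D' q)
    (hV : ∀ p ∈ D', p ∉ D → ¬ ZShape m D' p q ∧ ¬ SShape m D' p q) :
    IsAccordionDiag m D q := by
  induction q using Sym2.ind with | _ i j =>
  refine ⟨hq.1, fun C hC => ?_⟩
  have hC2 : 1 < C.card := by have := hC.1; omega
  obtain ⟨a₁, b₁, h₁, hi₁⟩ := exists_nextIn_bbtw hC2 i
  obtain ⟨a₂, b₂, h₂, hj₂⟩ := exists_nextIn_bbtw hC2 j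
  have hcrossed : ∀ p, IsCellEdge m C p → BWCross m s(i, j) p → p = s(a₁, b₁) ∨ p = s(a₂, b₂) := by
    rintro _ ⟨x, y, rfl, hxy⟩ hcr
    rcases hxy.eq_or_eq_of_bwCross hcr h₁ hi₁ h₂ hj₂ with ⟨rfl, rfl⟩ | ⟨rfl, rfl⟩
    exacts [Or.inl rfl, Or.inr rfl]
  by_cases hj₁ : bbtw m a₁ j b₁
  · -- both endpoints lie behind the same edge of `C`
    left
    obtain ⟨rfl, rfl⟩ := h₂.eq_of_bbtw h₁ hj₂ hj₁
    intro p hp hcr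
    obtain rfl := (hcrossed p hp hcr).elim id id
    exact (bwCross_mk_iff h₁.2.2.1).1 hcr |>.1 hi₁ hj₁
  right
  have hne : ¬(a₁ = a₂ ∧ b₁ = b₂) := fun ⟨h, h'⟩ => hj₁ (h ▸ h' ▸ hj₂)
  have hi₂ : ¬ bbtw m a₂ i b₂ := fun h => by
    obtain ⟨rfl, rfl⟩ := h₂.eq_of_bbtw h₁ h hi₁
    exact hne ⟨rfl, rfl⟩
  obtain ⟨v, hv₁, hv₂, -⟩ := hq.exists_mem_of_walk hm hD' hDD' hV hC h₁ hi₁ h₂ hj₂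
    (hC.2.1 a₁ b₁ h₁ |>.imp_right (hDD' ·)) h₁.1 h₁.2.1 (h₁.not_nextIn_swap hC.1) hi₁
    ((bbtw_iff_not_bbtw_swap j h₁.2.2.1.symm).2 hj₁) le_rfl
  exact ⟨_, _, h₁.mk_ne_mk hC.1 h₂ hne, ⟨a₁, b₁, rfl, h₁⟩, ⟨a₂, b₂, rfl, h₂⟩,
    bwCross_of_bbtw_of_not_bbtw h₁.2.2.1 hi₁ hj₁, bwCross_of_not_bbtw_of_bbtw h₂.2.2.1 hi₂ hj₂,
    ⟨v, hv₁, hv₂⟩, hcrossed⟩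

end Accordion

theorem gvec_eq_zero_iff {m : ℕ} {D : Finset (Sym2 (ZMod m))} {q p : Sym2 (ZMod m)} :
    gvec m D q p = 0 ↔ ¬ ZShape m D p q ∧ ¬ SShape m D p q := by
  unfold gvec
  split_ifs with hZ hS <;> simp [*]

/-- **Observation** (Pilaud–Plamondon–Stella, Section 4).
Let `D∘ ⊆ D∘'` be two nested dissections of the polygon `P∘` and let `δ•` be a `D∘'`-accordion
diagonal of `P•`.  Then `δ•` is a `D∘`-accordion diagonal if and only if the `δ∘'`-coordinate
of its `g`-vector with respect to `D∘'` vanishes for every `δ∘' ∈ D∘' \ D∘`; equivalently, if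
and only if `δ•` does not cross any diagonal of `D∘' \ D∘` as a `Z` or as an `S`. -/
theorem accordion_diag_iff_gvec_vanishes
    (m : ℕ) (hm : 3 ≤ m)
    (D D' : Finset (Sym2 (ZMod m)))
    (hD : IsDissection m D) (hD' : IsDissection m D') (hDD' : D ⊆ D')
    (q : Sym2 (ZMod m)) (hq : IsAccordionDiag m D' q) :
    (IsAccordionDiag m D q ↔ ∀ p ∈ D', p ∉ D → gvec m D' q p = 0) ∧
    (IsAccordionDiag m D q ↔ ∀ p ∈ D', p ∉ D → ¬ ZShape m D' p q ∧ ¬ SShape m D' p q) := by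
  have : NeZero m := ⟨by omega⟩
  have hiff : IsAccordionDiag m D q ↔
      ∀ p ∈ D', p ∉ D → ¬ ZShape m D' p q ∧ ¬ SShape m D' p q :=
    ⟨fun h _ hp hpD => h.not_zShape_and_not_sShape hm hD hD' hDD' hp hpD,
      hq.of_forall_not_zShape_and_not_sShape hm hD' hDD'⟩
  simpa only [gvec_eq_zero_iff, and_self] using hiff
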